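/- Let A be a commutative ring, f ∈ A, and for each n let K_n be the cokernel of the map A → A·f^{-n} (inside A_f), i.e. K_n = (f^{-n}A)/A ⊆ A_f/A. Then multiplication by f^n induces an isomorphism K_n ≅ A/(f^n), and the natural map K_n → Â ⊗_A K_n is an isomorphism, where Â = lim_n A/(f^n). Consequently the natural map A_f/A → Â ⊗_A (A_f/A) is an isomorphism. -/

import Mathlib

open TensorProduct

variable {A : Type} [CommRing A] (f : A)

/-- The quotient `A_f / A` of the localization by the image of `A`. -/
def LocModA (f : A) : Type :=
  Localization (Submonoid.powers f) ⧸
    LinearMap.range (Algebra.linearMap A (Localization (Submonoid.powers f)))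

noncomputable instance : AddCommGroup (LocModA f) := by
  unfold LocModA; infer_instance

noncomputable instance : Module A (LocModA f) := by
  unfold LocModA; infer_instance

/-- The map `A → A_f/A`, `a ↦ [a · f⁻ⁿ]`, whose image is `K_n = (f⁻ⁿA)/A` and whose
kernel is `(fⁿ)`. -/
noncomputable def phiN (f : A) (n : ℕ) : A →ₗ[A] LocModA f :=
  (Submodule.mkQ _).comp
    (LinearMap.toSpanSingleton A (Localization (Submonoid.powers f))
      (Localization.mk 1 ⟨f ^ n, ⟨n, rfl⟩⟩))

/-! The kernel of `Â → A/Iⁿ` is `Iⁿ Â` for a finitely generated ideal `I`, so every element of `Â`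
is `c + y` with `c ∈ A` and `y ∈ Iⁿ Â`; hence `Â ⊗ M = M` when `Iⁿ M = 0`, a left inverse coming
from `(A/Iⁿ) ⊗ M = M/IⁿM`. An `I`-power torsion module such as `A_f/A` is the union of its
submodules killed by the various `Iⁿ`, and a relation `1 ⊗ m = 0` in `Â ⊗ M` already holds in
`Â ⊗ Q` for a finitely generated `Q ⊆ M`, which is killed by a single `Iⁿ`. -/

namespace Submodule

variable {R M : Type*} [CommRing R] [AddCommGroup M] [Module R M]

theorem le_annihilator_torsionBySet (J : Ideal R) :
    J ≤ Module.annihilator R (torsionBySet R M J) :=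
  (Module.isTorsionBySet_iff_subset_annihilator _ _).mp (torsionBySet_isTorsionBySet _)

theorem FG.exists_le_torsionBySet_pow {I : Ideal R} {Q : Submodule R M} (hQ : Q.FG)
    (hM : ∀ m : M, ∃ n, m ∈ torsionBySet R M (I ^ n : Ideal R)) :
    ∃ n, Q ≤ torsionBySet R M (I ^ n : Ideal R) := by
  classical
  obtain ⟨S, rfl⟩ := hQ
  choose k hk using hM
  exact ⟨S.sup k, span_le.mpr fun m hm ↦
    torsionBySet_le_torsionBySet_pow _ _ (Finset.le_sup hm) I (hk m)⟩

end Submodule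

namespace AdicCompletion

variable {R M : Type*} [CommRing R] [AddCommGroup M] [Module R M] {I : Ideal R} {n : ℕ}

@[simp]
theorem eval_one : eval I R n 1 = 1 :=
  rfl

theorem mk_one_injective_of_pow_le_annihilator (hM : I ^ n ≤ Module.annihilator R M) :
    Function.Injective (TensorProduct.mk R (AdicCompletion I R) M 1) := by
  have hJ : ((I ^ n • ⊤ : Ideal R) • ⊤ : Submodule R M) = ⊥ := by
    rwa [smul_eq_mul, Ideal.mul_top, ← Submodule.le_annihilator_iff, Submodule.annihilator_top]
  let ψ := (quotTensorEquivQuotSMul M (I ^ n • ⊤ : Ideal R)).toLinearMap ∘ₗ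
    (eval I R n).rTensor M
  have hψ (m : M) : ψ (1 ⊗ₜ m) = Submodule.Quotient.mk m := by
    simp only [ψ, LinearMap.comp_apply, LinearMap.rTensor_tmul, eval_one, LinearEquiv.coe_coe,
      quotTensorEquivQuotSMul_mk_one_tmul]
  intro m m' h
  have := congrArg ψ h
  simp only [TensorProduct.mk_apply, hψ] at this
  rwa [Submodule.Quotient.eq, hJ, Submodule.mem_bot, sub_eq_zero] at this

theorem mk_one_surjective_of_pow_le_annihilator (hI : I.FG) (hM : I ^ n ≤ Module.annihilator R M) :
    Function.Surjective (TensorProduct.mk R (AdicCompletion I R) M 1) := by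
  have hsmul : ∀ y ∈ (I ^ n • ⊤ : Submodule R (AdicCompletion I R)), ∀ m : M, y ⊗ₜ[R] m = 0 := by
    intro y hy m
    refine Submodule.smul_induction_on hy (fun r hr z _ ↦ ?_) fun y y' hy hy' ↦ ?_
    · rw [smul_tmul, Module.mem_annihilator.mp (hM hr), tmul_zero]
    · rw [add_tmul, hy, hy', add_zero]
  have hdecomp (x : AdicCompletion I R) : ∃ c : R, x - c • 1 ∈ (I ^ n • ⊤ : Submodule R _) := by
    rw [pow_smul_top_eq_ker_eval hI]
    obtain ⟨c, hc⟩ := Ideal.Quotient.mk_surjective (eval I R n x)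
    refine ⟨c, ?_⟩
    rw [LinearMap.mem_ker, map_sub, map_smul, eval_one, ← hc]
    exact sub_eq_zero.mpr (Algebra.algebraMap_eq_smul_one c)
  rw [← LinearMap.range_eq_top, eq_top_iff, ← TensorProduct.span_tmul_eq_top, Submodule.span_le]
  rintro _ ⟨x, m, rfl⟩
  obtain ⟨c, hc⟩ := hdecomp x
  refine ⟨c • m, ?_⟩
  rw [TensorProduct.mk_apply, ← smul_tmul, eq_comm, ← sub_eq_zero, ← sub_tmul]
  exact hsmul _ hc m

theorem mk_one_bijective_of_pow_le_annihilator (hI : I.FG) (hM : I ^ n ≤ Module.annihilator R M) :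
    Function.Bijective (TensorProduct.mk R (AdicCompletion I R) M 1) :=
  ⟨mk_one_injective_of_pow_le_annihilator hM, mk_one_surjective_of_pow_le_annihilator hI hM⟩

theorem mk_one_bijective_of_forall_mem_torsionBySet_pow (hI : I.FG)
    (hM : ∀ m : M, ∃ n, m ∈ Submodule.torsionBySet R M (I ^ n : Ideal R)) :
    Function.Bijective (TensorProduct.mk R (AdicCompletion I R) M 1) := by
  refine ⟨(injective_iff_map_eq_zero _).mpr fun m hm ↦ ?_, ?_⟩
  · let P := R ∙ m
    let t : P ⊗[R] AdicCompletion I R := ⟨m, Submodule.mem_span_singleton_self m⟩ ⊗ₜ 1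
    have ht : P.subtype.rTensor _ t = 0 := by
      simpa [t] using congrArg (TensorProduct.comm R _ M) hm
    obtain ⟨Q, hPQ, hQ, hQt⟩ :=
      TensorProduct.eq_zero_of_fg_of_subtype_eq_zero (Submodule.fg_span_singleton m) ht
    obtain ⟨n, hn⟩ := hQ.exists_le_torsionBySet_pow hM
    let u : Submodule.torsionBySet R M (I ^ n : Ideal R) :=
      ⟨m, hn (hPQ (Submodule.mem_span_singleton_self m))⟩
    have hu : TensorProduct.mk R (AdicCompletion I R) _ 1 u = 0 := by
      have := congrArg (TensorProduct.comm R _ _ ∘ (Submodule.inclusion hn).rTensor _) hQt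
      simp only [t, Function.comp_apply, LinearMap.rTensor_tmul, comm_tmul] at this
      exact this
    have := (injective_iff_map_eq_zero _).mp
      (mk_one_injective_of_pow_le_annihilator (Submodule.le_annihilator_torsionBySet _)) u hu
    exact congrArg Subtype.val this
  · rw [← LinearMap.range_eq_top, eq_top_iff, ← TensorProduct.span_tmul_eq_top, Submodule.span_le]
    rintro _ ⟨x, m, rfl⟩
    obtain ⟨n, hn⟩ := hM m
    obtain ⟨t, ht⟩ := mk_one_surjective_of_pow_le_annihilator hI
      (Submodule.le_annihilator_torsionBySet _) (x ⊗ₜ[R] (⟨m, hn⟩ : Submodule.torsionBySet R M _))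
    refine ⟨t, ?_⟩
    simpa using congrArg ((Submodule.torsionBySet R M _).subtype.lTensor _) ht

end AdicCompletion

section

variable {f}

theorem phiN_apply (n : ℕ) (a : A) :
    phiN f n a = Submodule.Quotient.mk
      (Localization.mk a ⟨f ^ n, pow_mem (Submonoid.mem_powers f) n⟩) := by
  change Submodule.Quotient.mk (a • Localization.mk 1 _) = _
  rw [Localization.smul_mk, smul_eq_mul, mul_one]

theorem phiN_eq_zero_iff (n : ℕ) (a : A) : phiN f n a = 0 ↔
    ∃ b, algebraMap A _ b = Localization.mk a ⟨f ^ n, pow_mem (Submonoid.mem_powers f) n⟩ := by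
  rw [phiN_apply]
  exact Submodule.Quotient.mk_eq_zero _

theorem phiN_pow_mul (n : ℕ) (b : A) : phiN f n (f ^ n * b) = 0 :=
  (phiN_eq_zero_iff n _).mpr ⟨b, by
    rw [Localization.mk_eq_mk']
    exact (IsLocalization.mk'_mul_cancel_left b ⟨f ^ n, _⟩).symm⟩

theorem pow_smul_phiN (n : ℕ) (a : A) : f ^ n • phiN f n a = 0 := by
  rw [← map_smul, smul_eq_mul, phiN_pow_mul]

theorem ker_phiN (hf : f ∈ nonZeroDivisors A) (n : ℕ) :
    LinearMap.ker (phiN f n) = Ideal.span {f ^ n} := by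
  refine le_antisymm (fun a ha ↦ ?_) ?_
  · obtain ⟨b, hb⟩ := (phiN_eq_zero_iff n a).mp ha
    rw [Localization.mk_eq_mk', IsLocalization.eq_mk'_iff_mul_eq, ← map_mul] at hb
    exact Ideal.mem_span_singleton'.mpr
      ⟨b, IsLocalization.injective _ (Submonoid.powers_le.mpr hf) hb⟩
  · rw [Ideal.span_singleton_le_iff_mem, LinearMap.mem_ker, ← mul_one (f ^ n), phiN_pow_mul]

theorem exists_phiN_eq (x : LocModA f) : ∃ n a, phiN f n a = x := by
  obtain ⟨q, rfl⟩ := Submodule.Quotient.mk_surjective _ x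
  induction q using Localization.induction_on with
  | H p =>
    obtain ⟨a, _, n, rfl⟩ := p
    exact ⟨n, a, phiN_apply n a⟩

theorem span_singleton_pow_le_annihilator_range_phiN (n : ℕ) :
    Ideal.span {f} ^ n ≤ Module.annihilator A (LinearMap.range (phiN f n)) := by
  rw [Ideal.span_singleton_pow, Ideal.span_singleton_le_iff_mem, Module.mem_annihilator]
  rintro ⟨_, a, rfl⟩
  exact Subtype.ext (pow_smul_phiN n a)

theorem phiN_mem_torsionBySet (n : ℕ) (a : A) :
    phiN f n a ∈ Submodule.torsionBySet A (LocModA f) (Ideal.span {f} ^ n : Ideal A) := by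
  rw [Ideal.span_singleton_pow, ← Submodule.torsionBySet_eq_torsionBySet_span,
    Submodule.torsionBySet_singleton_eq, Submodule.mem_torsionBy_iff]
  exact pow_smul_phiN n a

end

theorem stmt_13 (hf : f ∈ nonZeroDivisors A) (n : ℕ) :
    LinearMap.ker (phiN f n) = Ideal.span {f ^ n} ∧
    Function.Bijective
      (TensorProduct.mk A (AdicCompletion (Ideal.span {f}) A)
        (LinearMap.range (phiN f n)) 1) ∧
    Function.Bijective
      (TensorProduct.mk A (AdicCompletion (Ideal.span {f}) A) (LocModA f) 1) := by
  have hfg : (Ideal.span {f}).FG := Submodule.fg_span_singleton f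
  refine ⟨ker_phiN hf n, AdicCompletion.mk_one_bijective_of_pow_le_annihilator hfg
    (span_singleton_pow_le_annihilator_range_phiN n),
    AdicCompletion.mk_one_bijective_of_forall_mem_torsionBySet_pow hfg fun x ↦ ?_⟩
  obtain ⟨k, a, rfl⟩ := exists_phiN_eq x
  exact ⟨k, phiN_mem_torsionBySet k a⟩
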